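/- For a vector field γ(x,y,z) = (φ̂₁(z)γ₁ₓ + φ̂₃(z)γ₃ₓ, φ̂₁(z)γ₁ᵧ + φ̂₃(z)γ₃ᵧ, φ₀(z)γ₀ + φ₂(z)γ₂) with φ̂₁' = φ₀ and φ̂₃' = φ₂, the curl is (φ₀(∂ᵧγ₀ − γ₁ᵧ) + φ₂(∂ᵧγ₂ − γ₃ᵧ), φ₀(γ₁ₓ − ∂ₓγ₀) + φ₂(γ₃ₓ − ∂ₓγ₂), φ̂₁·curl₂D γ₁ + φ̂₃·curl₂D γ₃). -/

import Mathlib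

/-! Every component of the ansatz is a sum of products of a function of `z` with a function of
`(x, y)`, so each partial derivative acts on one factor only: `∂_z` turns `φhat₁, φhat₃` into
`φ₀, φ₂`, while `∂_x, ∂_y` act on the planar fields. -/

noncomputable def curl2D (V : ℝ × ℝ → ℝ × ℝ) (x y : ℝ) : ℝ :=
  deriv (fun x' => (V (x', y)).2) x - deriv (fun y' => (V (x, y')).1) y

section PartialDifferentiability

variable {𝕜 : Type*} [NontriviallyNormedField 𝕜]
  {E F G : Type*} [NormedAddCommGroup E] [NormedSpace 𝕜 E] [NormedAddCommGroup F] [NormedSpace 𝕜 F]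
  [NormedAddCommGroup G] [NormedSpace 𝕜 G]

theorem DifferentiableAt.comp_prodMk_left {g : E × F → G} {x : E} {y : F}
    (hg : DifferentiableAt 𝕜 g (x, y)) : DifferentiableAt 𝕜 (fun x' => g (x', y)) x :=
  hg.comp x (differentiableAt_id.prodMk (differentiableAt_const y))

theorem DifferentiableAt.comp_prodMk_right {g : E × F → G} {x : E} {y : F}
    (hg : DifferentiableAt 𝕜 g (x, y)) : DifferentiableAt 𝕜 (fun y' => g (x, y')) y :=
  hg.comp y ((differentiableAt_const x).prodMk differentiableAt_id)

end PartialDifferentiability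

section LinearCombination

variable {𝕜 : Type*} [NontriviallyNormedField 𝕜] {f g : 𝕜 → 𝕜} {t : 𝕜}

theorem deriv_const_mul_add_const_mul (a b : 𝕜) (hf : DifferentiableAt 𝕜 f t)
    (hg : DifferentiableAt 𝕜 g t) :
    deriv (fun s => a * f s + b * g s) t = a * deriv f t + b * deriv g t := by
  rw [deriv_fun_add (hf.const_mul a) (hg.const_mul b), deriv_const_mul a hf, deriv_const_mul b hg]

theorem deriv_mul_const_add_mul_const (a b : 𝕜) (hf : DifferentiableAt 𝕜 f t)
    (hg : DifferentiableAt 𝕜 g t) :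
    deriv (fun s => f s * a + g s * b) t = deriv f t * a + deriv g t * b := by
  rw [deriv_fun_add (hf.mul_const a) (hg.mul_const b), deriv_mul_const hf, deriv_mul_const hg]

end LinearCombination

theorem stmt10_general (φ₀ φ₂ φhat₁ φhat₃ : ℝ → ℝ)
    (hφhat₁ : ContDiff ℝ 1 φhat₁) (hφhat₃ : ContDiff ℝ 1 φhat₃)
    (hd₁ : ∀ z, deriv φhat₁ z = φ₀ z) (hd₃ : ∀ z, deriv φhat₃ z = φ₂ z)
    (γ₀ γ₂ : ℝ × ℝ → ℝ) (γ₁ γ₃ : ℝ × ℝ → ℝ × ℝ)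
    (hγ₀ : ContDiff ℝ 1 γ₀) (hγ₂ : ContDiff ℝ 1 γ₂)
    (hγ₁ : ContDiff ℝ 1 γ₁) (hγ₃ : ContDiff ℝ 1 γ₃)
    (Fx Fy Fz : ℝ → ℝ → ℝ → ℝ)
    (hFx : Fx = fun x y z => φhat₁ z * (γ₁ (x, y)).1 + φhat₃ z * (γ₃ (x, y)).1)
    (hFy : Fy = fun x y z => φhat₁ z * (γ₁ (x, y)).2 + φhat₃ z * (γ₃ (x, y)).2)
    (hFz : Fz = fun x y z => φ₀ z * γ₀ (x, y) + φ₂ z * γ₂ (x, y)) :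
    ∀ x y z : ℝ,
      (deriv (fun y' => Fz x y' z) y - deriv (fun z' => Fy x y z') z
        = φ₀ z * (deriv (fun y' => γ₀ (x, y')) y - (γ₁ (x, y)).2)
          + φ₂ z * (deriv (fun y' => γ₂ (x, y')) y - (γ₃ (x, y)).2)) ∧
      (deriv (fun z' => Fx x y z') z - deriv (fun x' => Fz x' y z) x
        = φ₀ z * ((γ₁ (x, y)).1 - deriv (fun x' => γ₀ (x', y)) x)
          + φ₂ z * ((γ₃ (x, y)).1 - deriv (fun x' => γ₂ (x', y)) x)) ∧
      (deriv (fun x' => Fy x' y z) x - deriv (fun y' => Fx x y' z) y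
        = φhat₁ z * curl2D γ₁ x y + φhat₃ z * curl2D γ₃ x y) := by
  subst hFx hFy hFz
  intro x y z
  have hdiff {G : Type} [NormedAddCommGroup G] [NormedSpace ℝ G] {g : ℝ × ℝ → G}
      (hg : ContDiff ℝ 1 g) : DifferentiableAt ℝ g (x, y) :=
    hg.differentiable one_ne_zero (x, y)
  have hderiv_z (a b : ℝ) :
      deriv (fun z' => φhat₁ z' * a + φhat₃ z' * b) z = φ₀ z * a + φ₂ z * b := by
    rw [deriv_mul_const_add_mul_const a b (hφhat₁.differentiable one_ne_zero z)
      (hφhat₃.differentiable one_ne_zero z), hd₁, hd₃]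
  refine ⟨?_, ?_, ?_⟩
  · rw [deriv_const_mul_add_const_mul _ _ (hdiff hγ₀).comp_prodMk_right
      (hdiff hγ₂).comp_prodMk_right, hderiv_z]
    ring
  · rw [deriv_const_mul_add_const_mul _ _ (hdiff hγ₀).comp_prodMk_left
      (hdiff hγ₂).comp_prodMk_left, hderiv_z]
    ring
  · rw [deriv_const_mul_add_const_mul _ _ (hdiff hγ₁.snd).comp_prodMk_left
      (hdiff hγ₃.snd).comp_prodMk_left, deriv_const_mul_add_const_mul _ _
      (hdiff hγ₁.fst).comp_prodMk_right (hdiff hγ₃.fst).comp_prodMk_right, curl2D, curl2D]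
    ring

/-- Curl of the equilibrated-flux ansatz
γ(x,y,z) = (φhat₁γ₁ₓ + φhat₃γ₃ₓ, φhat₁γ₁ᵧ + φhat₃γ₃ᵧ, φ₀γ₀ + φ₂γ₂) with φhat₁' = φ₀, φhat₃' = φ₂. -/
theorem stmt10 (φ₀ φ₂ φhat₁ φhat₃ : ℝ → ℝ)
    (hφ₀ : ContDiff ℝ 1 φ₀) (hφ₂ : ContDiff ℝ 1 φ₂)
    (hφhat₁ : ContDiff ℝ 1 φhat₁) (hφhat₃ : ContDiff ℝ 1 φhat₃)
    (hd₁ : ∀ z, deriv φhat₁ z = φ₀ z) (hd₃ : ∀ z, deriv φhat₃ z = φ₂ z)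
    (γ₀ γ₂ : ℝ × ℝ → ℝ) (γ₁ γ₃ : ℝ × ℝ → ℝ × ℝ)
    (hγ₀ : ContDiff ℝ 1 γ₀) (hγ₂ : ContDiff ℝ 1 γ₂)
    (hγ₁ : ContDiff ℝ 1 γ₁) (hγ₃ : ContDiff ℝ 1 γ₃)
    (Fx Fy Fz : ℝ → ℝ → ℝ → ℝ)
    (hFx : Fx = fun x y z => φhat₁ z * (γ₁ (x, y)).1 + φhat₃ z * (γ₃ (x, y)).1)
    (hFy : Fy = fun x y z => φhat₁ z * (γ₁ (x, y)).2 + φhat₃ z * (γ₃ (x, y)).2)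
    (hFz : Fz = fun x y z => φ₀ z * γ₀ (x, y) + φ₂ z * γ₂ (x, y)) :
    ∀ x y z : ℝ,
      (deriv (fun y' => Fz x y' z) y - deriv (fun z' => Fy x y z') z
        = φ₀ z * (deriv (fun y' => γ₀ (x, y')) y - (γ₁ (x, y)).2)
          + φ₂ z * (deriv (fun y' => γ₂ (x, y')) y - (γ₃ (x, y)).2)) ∧
      (deriv (fun z' => Fx x y z') z - deriv (fun x' => Fz x' y z) x
        = φ₀ z * ((γ₁ (x, y)).1 - deriv (fun x' => γ₀ (x', y)) x)
          + φ₂ z * ((γ₃ (x, y)).1 - deriv (fun x' => γ₂ (x', y)) x)) ∧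
      (deriv (fun x' => Fy x' y z) x - deriv (fun y' => Fx x y' z) y
        = φhat₁ z * curl2D γ₁ x y + φhat₃ z * curl2D γ₃ x y) :=
  stmt10_general φ₀ φ₂ φhat₁ φhat₃ hφhat₁ hφhat₃ hd₁ hd₃ γ₀ γ₂ γ₁ γ₃ hγ₀ hγ₂ hγ₁ hγ₃ Fx Fy Fz hFx
    hFy hFz
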